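/- arXiv:2202.12542 — 4 statements merged into one kernel-verified Lean document; each statement's English description precedes it below -/
import Mathlib

section
/- Let T be a complex algebraic torus and θ an algebraic automorphism of T of finite order. Then the intersection of the image of the homomorphism (1−θ): t ↦ t·θ(t)^{-1} with the fixed-point subgroup T^θ is a finite group. -/
open scoped BigOperators

/-- An algebraic automorphism of the torus `(ℂˣ)ⁿ`, given by a matrix `M ∈ GL(n,ℤ)`
(acting by monomials on the coordinates) whose `k`-th power is the identity. -/
noncomputable def torusAut (n : ℕ) (M : Matrix (Fin n) (Fin n) ℤ) :
    (Fin n → ℂˣ) → (Fin n → ℂˣ) :=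
  fun t i => ∏ j : Fin n, t j ^ M i j

lemma zpow_sum_aux {ι : Type*} {G : Type*} [CommGroup G] (a : G) (s : Finset ι) (f : ι → ℤ) :
    a ^ (∑ i ∈ s, f i) = ∏ i ∈ s, a ^ f i := by
  induction s using Finset.cons_induction with
  | empty => simp
  | cons i s hi ih => simp [zpow_add, ih]

lemma torusAut_one (n : ℕ) (t : Fin n → ℂˣ) : torusAut n 1 t = t := by
  funext i
  simp only [torusAut, Matrix.one_apply]
  rw [Finset.prod_eq_single i] <;> simp (config := {contextual := true}) [eq_comm]

lemma torusAut_comp (n : ℕ) (M M' : Matrix (Fin n) (Fin n) ℤ) (t : Fin n → ℂˣ) :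
    torusAut n M (torusAut n M' t) = torusAut n (M * M') t := by
  funext i
  simp only [torusAut, Matrix.mul_apply, ← Finset.prod_zpow]
  rw [Finset.prod_comm]
  congr 1
  funext l
  rw [zpow_sum_aux]
  congr 1
  funext j
  rw [← zpow_mul, mul_comm]

lemma torusAut_mul (n : ℕ) (M : Matrix (Fin n) (Fin n) ℤ) (t s : Fin n → ℂˣ) :
    torusAut n M (t * s) = torusAut n M t * torusAut n M s := by
  funext i
  simp [torusAut, mul_zpow, Finset.prod_mul_distrib]

lemma torusAut_inv (n : ℕ) (M : Matrix (Fin n) (Fin n) ℤ) (t : Fin n → ℂˣ) :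
    torusAut n M t⁻¹ = (torusAut n M t)⁻¹ := by
  funext i
  simp [torusAut, inv_zpow]

lemma torusAut_pow_fixed (n : ℕ) (M : Matrix (Fin n) (Fin n) ℤ) (z : Fin n → ℂˣ)
    (hz : torusAut n M z = z) (m : ℕ) : torusAut n (M ^ m) z = z := by
  induction m with
  | zero => simpa using torusAut_one n z
  | succ m ih => rw [pow_succ', ← torusAut_comp, ih, hz]

/-- Let `T` be a complex algebraic torus and `θ` an algebraic automorphism of `T` of finite
order. Then the intersection of the image of `t ↦ t · θ(t)⁻¹` with the fixed-point
subgroup `T^θ` is finite. -/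
theorem finite_one_sub_theta_inter_fixed
    (n : ℕ) (M : Matrix (Fin n) (Fin n) ℤ) (k : ℕ) (hk : 0 < k) (hM : M ^ k = 1) :
    Set.Finite {z : Fin n → ℂˣ |
      (∃ t : Fin n → ℂˣ, z = t * (torusAut n M t)⁻¹) ∧ torusAut n M z = z} := by
  have hsub : {z : Fin n → ℂˣ |
      (∃ t : Fin n → ℂˣ, z = t * (torusAut n M t)⁻¹) ∧ torusAut n M z = z} ⊆
      {z : Fin n → ℂˣ | z ^ k = 1} := by
    rintro z ⟨⟨t, ht⟩, hz⟩
    have key : ∀ m : ℕ, torusAut n (M ^ m) z =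
        torusAut n (M ^ m) t / torusAut n (M ^ (m + 1)) t := by
      intro m
      rw [ht, torusAut_mul, torusAut_inv, torusAut_comp, ← pow_succ, div_eq_mul_inv]
    have : z ^ k = ∏ m ∈ Finset.range k, torusAut n (M ^ m) z := by
      rw [Finset.prod_congr rfl fun m _ => torusAut_pow_fixed n M z hz m]
      simp
    rw [Set.mem_setOf_eq, this, Finset.prod_congr rfl fun m _ => key m,
      Finset.prod_range_div' (fun m => torusAut n (M ^ m) t) k, hM, pow_zero,
      torusAut_one, div_self']
  refine Set.Finite.subset ?_ hsub
  have : {z : Fin n → ℂˣ | z ^ k = 1} ⊆ Set.pi Set.univ fun _ => {x : ℂˣ | x ^ k = 1} := by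
    intro z hz i _
    exact congrFun hz i
  refine Set.Finite.subset (Set.Finite.pi fun i => ?_) this
  haveI : NeZero k := ⟨hk.ne'⟩
  have : {x : ℂˣ | x ^ k = 1} = (rootsOfUnity k ℂ : Set ℂˣ) := by
    ext x; simp [mem_rootsOfUnity]
  rw [this]
  haveI : Finite (rootsOfUnity k ℂ) := inferInstance
  exact Set.toFinite _
end

section
/- Let A be a finite set, θ a permutation of A, and let θ act on the torus T = (ℂ^×)^A by (θ·t)_a = t_{θ^{-1}(a)}. An element z ∈ T lies in (1−θ)(T) ∩ T^θ if and only if z is constant on each θ-orbit O and the common value z_O satisfies z_O^{|O|} = 1. -/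
/-- The action of a permutation `θ` of `A` on the torus `(ℂˣ)^A`: `(θ·t)_a = t_{θ⁻¹ a}`. -/
def permTorusAct {A : Type*} (θ : Equiv.Perm A) (t : A → ℂˣ) : A → ℂˣ :=
  fun a => t (θ.symm a)

/-- For a permutation `θ` of a finite set `A` acting on `T = (ℂˣ)^A` by permuting
coordinates, `z ∈ (1−θ)(T) ∩ T^θ` iff `z` is constant on each `θ`-orbit and the common
value on each orbit `O` satisfies `z_O^{|O|} = 1` (the orbit size being the minimal
period of `θ` at a point of the orbit). -/
theorem mem_one_sub_theta_inter_fixed_iff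
    {A : Type*} [Fintype A] [DecidableEq A] (θ : Equiv.Perm A) (z : A → ℂˣ) :
    ((∃ t : A → ℂˣ, z = t * (permTorusAct θ t)⁻¹) ∧ permTorusAct θ z = z) ↔
    ((∀ a : A, z (θ a) = z a) ∧
      ∀ a : A, z a ^ (Function.minimalPeriod (⇑θ) a) = 1) := by
  constructor
  · rintro ⟨⟨t, ht⟩, hfix⟩
    have hz : ∀ a, z (θ a) = z a := by
      intro a
      have h2 := congrFun hfix (θ a)
      simp only [permTorusAct, Equiv.symm_apply_apply] at h2
      exact h2.symm
    refine ⟨hz, ?_⟩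
    have hziter : ∀ (k : ℕ) (a : A), z (θ^[k] a) = z a := by
      intro k
      induction k with
      | zero => intro a; simp
      | succ k ih => intro a; rw [Function.iterate_succ_apply', hz, ih]
    have hzt : ∀ a, z a = t a / t (θ.symm a) := by
      intro a
      have := congrFun ht a
      simpa [permTorusAct, div_eq_mul_inv] using this
    intro a
    have hper : θ^[Function.minimalPeriod (⇑θ) a] a = a :=
      Function.iterate_minimalPeriod
    calc z a ^ (Function.minimalPeriod (⇑θ) a)
        = ∏ k ∈ Finset.range (Function.minimalPeriod (⇑θ) a), z (θ^[k+1] a) := by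
          simp only [hziter, Finset.prod_const, Finset.card_range]
      _ = ∏ k ∈ Finset.range (Function.minimalPeriod (⇑θ) a),
            t (θ^[k+1] a) / t (θ^[k] a) := by
          refine Finset.prod_congr rfl fun k _ => ?_
          rw [hzt]
          congr 1
          rw [Function.iterate_succ_apply']
          simp
      _ = t (θ^[Function.minimalPeriod (⇑θ) a] a) / t (θ^[0] a) :=
          Finset.prod_range_div (fun k => t (θ^[k] a)) _
      _ = 1 := by rw [hper]; simp
  · rintro ⟨hz, hord⟩
    have hzsym : ∀ a, z (θ.symm a) = z a := by
      intro a
      have := hz (θ.symm a)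
      simpa using this.symm
    have hfix : permTorusAct θ z = z := funext fun a => hzsym a
    refine ⟨?_, hfix⟩
    set s : Setoid A := Equiv.Perm.SameCycle.setoid θ with hs
    let rep : A → A := fun a => Quotient.out (Quotient.mk s a)
    have hrep : ∀ a, θ.SameCycle (rep a) a := fun a => Quotient.mk_out a
    have hrepsym : ∀ a, rep (θ.symm a) = rep a := by
      intro a
      have : Quotient.mk s (θ.symm a) = Quotient.mk s a :=
        Quotient.sound (⟨1, by simp⟩ : θ.SameCycle (θ.symm a) a)
      simp only [rep, this]
    have hex : ∀ a, ∃ i : ℕ, (θ ^ i) (rep a) = a := by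
      intro a
      obtain ⟨i, _, hi⟩ := (hrep a).exists_pow_eq'
      exact ⟨i, hi⟩
    let k : A → ℕ := fun a => Nat.find (hex a)
    have hk : ∀ a, (θ ^ k a) (rep a) = a := fun a => Nat.find_spec (hex a)
    refine ⟨fun a => z a ^ k a, funext fun a => ?_⟩
    simp only [Pi.mul_apply, Pi.inv_apply, permTorusAct, hzsym]
    -- goal: z a = z a ^ k a * (z a ^ k (θ.symm a))⁻¹
    rcases Nat.eq_zero_or_eq_succ_pred (k a) with h0 | hsucc
    · -- a = rep a
      have ha : rep a = a := by have := hk a; rwa [h0, pow_zero] at this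
      have hper : Function.IsPeriodicPt (⇑θ) (k (θ.symm a) + 1) a := by
        have h1 := hk (θ.symm a)
        rw [hrepsym, ha] at h1
        show θ^[k (θ.symm a) + 1] a = a
        rw [Equiv.Perm.iterate_eq_pow, pow_succ', Equiv.Perm.mul_apply, h1]
        simp
      obtain ⟨c, hc⟩ := hper.minimalPeriod_dvd
      have hone : z a ^ (k (θ.symm a) + 1) = 1 := by
        rw [hc, pow_mul, hord, one_pow]
      rw [pow_succ] at hone
      rw [h0, pow_zero, one_mul, inv_eq_of_mul_eq_one_right hone]
    · set m0 := (k a).pred with hm0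
      have hm : k a = m0 + 1 := hsucc
      have hle1 : k (θ.symm a) ≤ m0 := by
        apply Nat.find_le
        rw [hrepsym]
        have := hk a
        rw [hm, pow_succ', Equiv.Perm.mul_apply] at this
        rw [Equiv.eq_symm_apply]
        exact this
      have hle2 : k a ≤ k (θ.symm a) + 1 := by
        apply Nat.find_le
        have := hk (θ.symm a)
        rw [hrepsym] at this
        rw [pow_succ', Equiv.Perm.mul_apply, this]
        simp
      have heq : k (θ.symm a) = m0 := le_antisymm hle1 (by omega)
      rw [hm, heq, pow_succ]
      group
end

section
/- Let Σ be a root system in a real inner product space V, let P ⊊ Σ be a proper parabolic subset with Levi subset M = P ∩ (−P), and let δ̌ be the sum of the coroots α̌ for α ∈ P ∖ M. Then ⟨β, δ̌⟩ = 0 for every β ∈ M, and δ̌ ≠ 0. -/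
open scoped BigOperators RealInnerProductSpace

/-- Let `Σ` be a root system in a real inner product space, `P ⊊ Σ` a proper parabolic
subset with Levi subset `M = P ∩ (-P)`, and let `δ̌` be the sum of the coroots
`α̌ = (2/⟪α,α⟫) • α` over `α ∈ P \ M`. Then `⟪β, δ̌⟫ = 0` for every `β ∈ M`, and
`δ̌ ≠ 0`. -/
theorem coroot_sum_orthogonal_to_levi
    (V : Type*) [NormedAddCommGroup V] [InnerProductSpace ℝ V]
    (S : Set V) (hfin : S.Finite) (h0 : (0 : V) ∉ S)
    (hsym : ∀ α ∈ S, -α ∈ S)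
    (hrefl : ∀ α ∈ S, ∀ β ∈ S, β - (2 * ⟪α, β⟫ / ⟪α, α⟫) • α ∈ S)
    (hint : ∀ α ∈ S, ∀ β ∈ S, ∃ n : ℤ, 2 * ⟪α, β⟫ / ⟪α, α⟫ = (n : ℝ))
    (P : Set V) (hPsub : P ⊆ S)
    (hPclosed : ∀ α ∈ P, ∀ β ∈ P, α + β ∈ S → α + β ∈ P)
    (hPunion : P ∪ (-P) = S)
    (hproper : P ≠ S)
    (M : Set V) (hM : M = P ∩ (-P))
    (hPMfin : (P \ M).Finite)
    (δ : V) (hδ : δ = ∑ α ∈ hPMfin.toFinset, (2 / ⟪α, α⟫) • α) :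
    (∀ β ∈ M, ⟪β, δ⟫ = 0) ∧ δ ≠ 0 := by
  classical
  -- basic facts
  have hpos : ∀ α ∈ S, 0 < ⟪α, α⟫ := by
    intro α hα
    have hne : α ≠ 0 := fun h => h0 (h ▸ hα)
    exact lt_of_le_of_ne real_inner_self_nonneg (Ne.symm (inner_self_ne_zero.mpr hne))
  have hNS : P \ M ⊆ S := fun α hα => hPsub hα.1
  have hNnegP : ∀ α ∈ P \ M, -α ∉ P := by
    intro α hα hc
    exact hα.2 (hM ▸ ⟨hα.1, Set.mem_neg.mpr hc⟩)
  -- P \ M is an ideal in P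
  have hideal : ∀ α ∈ P \ M, ∀ β ∈ P, α + β ∈ S → α + β ∈ P \ M := by
    intro α hα β hβ hs
    refine ⟨hPclosed α hα.1 β hβ hs, ?_⟩
    intro hmem
    rw [hM] at hmem
    have h1 : -(α + β) ∈ P := Set.mem_neg.mp hmem.2
    have h2 : -(α + β) + β = -α := by abel
    have h3 : -(α + β) + β ∈ S := by rw [h2]; exact hsym α (hPsub hα.1)
    have h4 : -α ∈ P := h2 ▸ hPclosed _ h1 β hβ h3
    exact hNnegP α hα h4
  -- the sum of two roots at obtuse angle is a root (if nonzero)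
  have hsum : ∀ γ ∈ S, ∀ φ ∈ S, ⟪γ, φ⟫ < 0 → γ + φ ≠ 0 → γ + φ ∈ S := by
    intro γ hγ φ hφ hneg hne
    obtain ⟨a, ha⟩ := hint γ hγ φ hφ
    obtain ⟨b, hb⟩ := hint φ hφ γ hγ
    have hγγ := hpos γ hγ
    have hφφ := hpos φ hφ
    rw [real_inner_comm γ φ] at hb
    have ha' : (a : ℝ) < 0 := ha ▸ div_neg_of_neg_of_pos (by linarith) hγγ
    have hb' : (b : ℝ) < 0 := hb ▸ div_neg_of_neg_of_pos (by linarith) hφφ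
    have hab : (a : ℝ) * b ≤ 4 := by
      rw [← ha, ← hb, div_mul_div_comm, div_le_iff₀ (by positivity)]
      nlinarith [real_inner_mul_inner_self_le γ φ]
    have haZ : a ≤ -1 := by
      have h : a < 0 := by exact_mod_cast ha'
      omega
    have hbZ : b ≤ -1 := by
      have h : b < 0 := by exact_mod_cast hb'
      omega
    have habZ : a * b ≤ 4 := by exact_mod_cast hab
    have hcase : b = -1 ∨ a = -1 ∨ (a = -2 ∧ b = -2) := by
      by_contra hc
      push_neg at hc
      obtain ⟨h1, h2, h3⟩ := hc
      have hb2 : b ≤ -2 := by omega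
      have ha2 : a ≤ -2 := by omega
      have : a ≤ -3 ∨ b ≤ -3 := by
        rcases eq_or_lt_of_le ha2 with h | h
        · exact Or.inr (by omega)
        · exact Or.inl (by omega)
      rcases this with h | h <;> nlinarith
    rcases hcase with hc | hc | ⟨hc1, hc2⟩
    · have := hrefl φ hφ γ hγ
      rw [real_inner_comm γ φ, hb, hc] at this
      simpa [neg_smul, sub_neg_eq_add] using this
    · have := hrefl γ hγ φ hφ
      rw [ha, hc] at this
      rw [add_comm]
      simpa [neg_smul, sub_neg_eq_add] using this
    · exfalso
      rw [hc1] at ha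
      rw [hc2] at hb
      have e1 : ⟪γ, φ⟫ = -⟪γ, γ⟫ := by
        field_simp at ha; push_cast at ha; linarith
      have e2 : ⟪γ, φ⟫ = -⟪φ, φ⟫ := by
        field_simp at hb; push_cast at hb; linarith
      have : ⟪γ + φ, γ + φ⟫ = 0 := by
        rw [real_inner_add_add_self]; linarith
      exact hne (inner_self_eq_zero.mp this)
  -- chain lemma
  have hchain : ∀ β ∈ P, ∀ n : ℕ, ∀ α ∈ P \ M,
      2 * ⟪β, α⟫ / ⟪β, β⟫ = -(n : ℝ) → α + (n : ℝ) • β ∈ P \ M := by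
    intro β hβP n
    induction n using Nat.strong_induction_on with
    | _ n IH =>
      intro α hα hc
      have hβS := hPsub hβP
      have hαS := hNS hα
      have hββ := hpos β hβS
      match n, IH with
      | 0, _ => simpa using hα
      | (m+1), IH =>
        have hβα : ⟪β, α⟫ < 0 := by
          have h2 : 2 * ⟪β, α⟫ = -((m+1 : ℕ) : ℝ) * ⟪β, β⟫ := by
            rw [div_eq_iff hββ.ne'] at hc; linarith [hc]
          have hm1 : (1 : ℝ) ≤ ((m+1 : ℕ) : ℝ) := by exact_mod_cast Nat.one_le_iff_ne_zero.mpr (by omega)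
          nlinarith
        have hne0 : α + β ≠ 0 := by
          intro h
          have : -α = β := neg_eq_of_add_eq_zero_right h
          exact hNnegP α hα (this ▸ hβP)
        have hαβS : α + β ∈ S := hsum α hαS β hβS (by rw [real_inner_comm]; exact hβα) hne0
        have hαβN : α + β ∈ P \ M := hideal α hα β hβP hαβS
        match m with
        | 0 => simpa using hαβN
        | (k+1) =>
          -- n = k+2
          have hc2 : 2 * ⟪β, α + β⟫ / ⟪β, β⟫ = -((k : ℕ) : ℝ) := by
            rw [inner_add_right, div_eq_iff hββ.ne']
            rw [div_eq_iff hββ.ne'] at hc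
            push_cast at hc ⊢
            linarith
          have hmid := IH k (by omega) (α + β) hαβN hc2
          have hfinS : α - (2 * ⟪β, α⟫ / ⟪β, β⟫) • β ∈ S := hrefl β hβS α hαS
          rw [hc] at hfinS
          have heq1 : α - (-((k+1+1 : ℕ) : ℝ)) • β = α + ((k+1+1 : ℕ) : ℝ) • β := by
            rw [neg_smul, sub_neg_eq_add]
          rw [heq1] at hfinS
          have heq2 : α + ((k+1+1 : ℕ) : ℝ) • β = ((α + β) + ((k : ℕ) : ℝ) • β) + β := by
            push_cast
            module
          rw [heq2] at hfinS ⊢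
          exact hideal _ hmid β hβP hfinS
  -- reflections through M-elements or nonpositively-paired N-elements preserve N
  have hreflN : ∀ β ∈ S, β ∈ P →
      ∀ α ∈ P \ M, (-β ∈ P ∨ ⟪β, α⟫ ≤ 0) → α - (2 * ⟪β, α⟫ / ⟪β, β⟫) • β ∈ P \ M := by
    intro β hβS hβP α hα hor
    have hββ := hpos β hβS
    obtain ⟨n, hn⟩ := hint β hβS α (hNS hα)
    rcases le_or_gt n 0 with hn0 | hn0
    · -- use chain with β itself
      have h1 : ((((-n).toNat : ℕ)) : ℝ) = -(n : ℝ) := by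
        rw [← Int.cast_natCast, Int.toNat_of_nonneg (by omega)]
        push_cast
        ring
      have hcoef : 2 * ⟪β, α⟫ / ⟪β, β⟫ = -((((-n).toNat : ℕ)) : ℝ) := by
        rw [h1, hn]; ring
      have h := hchain β hβP (-n).toNat α hα hcoef
      have heq : α - (2 * ⟪β, α⟫ / ⟪β, β⟫) • β = α + ((((-n).toNat : ℕ)) : ℝ) • β := by
        rw [h1, hn]; module
      rw [heq]
      exact h
    · -- n > 0; need -β ∈ P
      rcases hor with hβ' | hle
      · have h1 : ((n.toNat : ℕ) : ℝ) = (n : ℝ) := by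
          rw [← Int.cast_natCast, Int.toNat_of_nonneg (by omega)]
        have hinn : (2 : ℝ) * ⟪-β, α⟫ / ⟪-β, -β⟫ = -(2 * ⟪β, α⟫ / ⟪β, β⟫) := by
          rw [inner_neg_left, inner_neg_neg]
          ring
        have hn' : 2 * ⟪-β, α⟫ / ⟪-β, -β⟫ = -((n.toNat : ℕ) : ℝ) := by
          rw [hinn, h1, hn]
        have h := hchain (-β) hβ' n.toNat α hα hn'
        have heq : α - (2 * ⟪β, α⟫ / ⟪β, β⟫) • β = α + ((n.toNat : ℕ) : ℝ) • (-β) := by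
          rw [h1, hn]; module
        rw [heq]
        exact h
      · exfalso
        have h2 : ⟪β, α⟫ ≤ 0 := hle
        have h3 : 2 * ⟪β, α⟫ / ⟪β, β⟫ ≤ 0 := div_nonpos_of_nonpos_of_nonneg (by linarith) hββ.le
        rw [hn] at h3
        have h4 : n ≤ 0 := by exact_mod_cast h3
        omega
  -- reflection computations
  have hs_inner : ∀ β : V, ⟪β, β⟫ ≠ 0 → ∀ x : V,
      ⟪β, x - (2 * ⟪β, x⟫ / ⟪β, β⟫) • β⟫ = -⟪β, x⟫ := by
    intro β h x
    rw [inner_sub_right, real_inner_smul_right]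
    field_simp
    ring
  have hs_norm : ∀ β : V, ⟪β, β⟫ ≠ 0 → ∀ x : V,
      ⟪x - (2 * ⟪β, x⟫ / ⟪β, β⟫) • β, x - (2 * ⟪β, x⟫ / ⟪β, β⟫) • β⟫ = ⟪x, x⟫ := by
    intro β h x
    rw [real_inner_sub_sub_self, real_inner_smul_right, real_inner_smul_left,
      real_inner_smul_right, real_inner_comm x β]
    field_simp
    ring
  have hs_invol : ∀ β : V, ⟪β, β⟫ ≠ 0 → ∀ x : V,
      (x - (2 * ⟪β, x⟫ / ⟪β, β⟫) • β) -
        (2 * ⟪β, x - (2 * ⟪β, x⟫ / ⟪β, β⟫) • β⟫ / ⟪β, β⟫) • β = x := by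
    intro β h x
    rw [inner_sub_right, real_inner_smul_right]
    rw [show 2 * (⟪β, x⟫ - 2 * ⟪β, x⟫ / ⟪β, β⟫ * ⟪β, β⟫) / ⟪β, β⟫
        = -(2 * ⟪β, x⟫ / ⟪β, β⟫) by field_simp; ring]
    module
  have hmemF : ∀ x : V, x ∈ hPMfin.toFinset ↔ x ∈ P \ M := fun _ => hPMfin.mem_toFinset
  constructor
  · -- orthogonality to M
    intro β hβ
    have hβ' : β ∈ P ∩ -P := hM ▸ hβ
    have hβP : β ∈ P := hβ'.1
    have hβnegP : -β ∈ P := Set.mem_neg.mp hβ'.2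
    have hβS : β ∈ S := hPsub hβP
    have hββ := hpos β hβS
    rw [hδ, inner_sum]
    simp only [real_inner_smul_right]
    refine Finset.sum_involution
      (fun a _ => a - (2 * ⟪β, a⟫ / ⟪β, β⟫) • β) ?_ ?_ ?_ ?_
    · intro a ha
      rw [hs_norm β hββ.ne' a, hs_inner β hββ.ne' a]
      ring
    · intro a ha hfa heq
      apply hfa
      have hcoef : (2 * ⟪β, a⟫ / ⟪β, β⟫) • β = 0 := sub_eq_self.mp heq
      rcases smul_eq_zero.mp hcoef with hc | hc
      · have : ⟪β, a⟫ = 0 := by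
          rcases div_eq_zero_iff.mp hc with h | h
          · linarith
          · exact absurd h hββ.ne'
        rw [this]
        ring
      · exact absurd hc (fun h => h0 (h ▸ hβS))
    · intro a ha
      exact (hmemF _).mpr (hreflN β hβS hβP a ((hmemF _).mp ha) (Or.inl hβnegP))
    · intro a ha
      exact hs_invol β hββ.ne' a
  · -- δ ≠ 0
    have hPS : P ⊂ S := hPsub.ssubset_of_ne hproper
    obtain ⟨γ, hγS, hγP⟩ := Set.exists_of_ssubset hPS
    have hγ' : γ ∈ P ∪ -P := hPunion ▸ hγS
    have hγneg : γ ∈ -P := hγ'.resolve_left hγP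
    have hα₀P : -γ ∈ P := Set.mem_neg.mp hγneg
    have hα₀N : -γ ∈ P \ M := by
      refine ⟨hα₀P, ?_⟩
      intro hmem
      rw [hM] at hmem
      have : -(-γ) ∈ P := Set.mem_neg.mp hmem.2
      rw [neg_neg] at this
      exact hγP this
    set α₀ : V := -γ with hα₀def
    have hα₀S : α₀ ∈ S := hNS hα₀N
    have hαα := hpos α₀ hα₀S
    suffices h : 0 < ⟪α₀, δ⟫ by
      intro hzero
      rw [hzero, inner_zero_right] at h
      exact lt_irrefl 0 h
    rw [hδ, inner_sum]
    simp only [real_inner_smul_right]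
    set F := hPMfin.toFinset with hFdef
    set p : V → Prop := fun a => a - (2 * ⟪α₀, a⟫ / ⟪α₀, α₀⟫) • α₀ ∈ F with hp
    rw [← Finset.sum_filter_add_sum_filter_not F p]
    have h1 : ∑ x ∈ F.filter p, 2 / ⟪x, x⟫ * ⟪α₀, x⟫ = 0 := by
      refine Finset.sum_involution
        (fun a _ => a - (2 * ⟪α₀, a⟫ / ⟪α₀, α₀⟫) • α₀) ?_ ?_ ?_ ?_
      · intro a ha
        rw [hs_norm α₀ hαα.ne' a, hs_inner α₀ hαα.ne' a]
        ring
      · intro a ha hfa heq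
        apply hfa
        have hcoef : (2 * ⟪α₀, a⟫ / ⟪α₀, α₀⟫) • α₀ = 0 := sub_eq_self.mp heq
        rcases smul_eq_zero.mp hcoef with hc | hc
        · have : ⟪α₀, a⟫ = 0 := by
            rcases div_eq_zero_iff.mp hc with h | h
            · linarith
            · exact absurd h hαα.ne'
          rw [this]
          ring
        · exact absurd hc (fun h => h0 (h ▸ hα₀S))
      · intro a ha
        rw [Finset.mem_filter] at ha ⊢
        refine ⟨ha.2, ?_⟩
        show (a - (2 * ⟪α₀, a⟫ / ⟪α₀, α₀⟫) • α₀) -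
          (2 * ⟪α₀, a - (2 * ⟪α₀, a⟫ / ⟪α₀, α₀⟫) • α₀⟫ / ⟪α₀, α₀⟫) • α₀ ∈ F
        rw [hs_invol α₀ hαα.ne' a]
        exact ha.1
      · intro a ha
        exact hs_invol α₀ hαα.ne' a
    have h2 : 0 < ∑ x ∈ F.filter (fun a => ¬ p a), 2 / ⟪x, x⟫ * ⟪α₀, x⟫ := by
      refine Finset.sum_pos ?_ ?_
      · intro a ha
        rw [Finset.mem_filter] at ha
        have haN : a ∈ P \ M := (hmemF a).mp ha.1
        have haS : a ∈ S := hNS haN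
        have hinner : 0 < ⟪α₀, a⟫ := by
          by_contra hle
          push_neg at hle
          have := hreflN α₀ hα₀S hα₀P a haN (Or.inr hle)
          exact ha.2 ((hmemF _).mpr this)
        have := hpos a haS
        positivity
      · refine ⟨α₀, ?_⟩
        rw [Finset.mem_filter]
        refine ⟨(hmemF _).mpr hα₀N, ?_⟩
        show ¬ (α₀ - (2 * ⟪α₀, α₀⟫ / ⟪α₀, α₀⟫) • α₀ ∈ F)
        have heq : α₀ - (2 * ⟪α₀, α₀⟫ / ⟪α₀, α₀⟫) • α₀ = -α₀ := by
          rw [mul_div_assoc, div_self hαα.ne', mul_one]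
          module
        rw [heq]
        intro hmem
        exact hNnegP α₀ hα₀N ((hmemF _).mp hmem).1
    rw [h1, zero_add]
    exact h2
end

section
/- Let G be a group, H an abelian normal subgroup of G of index 2, and suppose there exist g₀ ∈ G ∖ H and x ∈ H such that g₀² = g₀ x g₀^{-1} x^{-1}. Then there is no function ζ : G → {±1} satisfying both: (a) ζ(gh) = ζ(hg) = ζ(g)ζ(h) for all g ∈ G and h ∈ H; and (b) ζ(g²) = −1 for all g ∈ G ∖ H. -/
/-- Let `G` be a group, `H` an abelian normal subgroup of index 2, and suppose some
`g₀ ∉ H` satisfies `g₀² = g₀ x g₀⁻¹ x⁻¹` for some `x ∈ H`. Then there is no function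
`ζ : G → {±1}` with `ζ(gh) = ζ(hg) = ζ(g)ζ(h)` for all `g ∈ G`, `h ∈ H`, and
`ζ(g²) = -1` for all `g ∉ H`. -/
theorem no_sign_function_on_index_two_extension
    (G : Type*) [Group G] (H : Subgroup G) [H.Normal]
    (hindex : H.index = 2)
    (habelian : ∀ a ∈ H, ∀ b ∈ H, a * b = b * a)
    (g₀ : G) (hg₀ : g₀ ∉ H) (x : G) (hx : x ∈ H)
    (hrel : g₀ ^ 2 = g₀ * x * g₀⁻¹ * x⁻¹) :
    ¬ ∃ ζ : G → ℤˣ,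
      (∀ (g : G), ∀ h ∈ H, ζ (g * h) = ζ g * ζ h ∧ ζ (h * g) = ζ g * ζ h) ∧
      (∀ g : G, g ∉ H → ζ (g ^ 2) = -1) := by
  rintro ⟨ζ, hmul, hsq⟩
  -- ζ(1) = 1
  have h1 : ζ 1 = 1 := by
    have := (hmul 1 1 H.one_mem).1
    rw [mul_one, ← sq, Int.units_sq] at this
    exact this
  set c := g₀ * x * g₀⁻¹ with hc
  have hcH : c ∈ H := by
    have := Subgroup.Normal.conj_mem ‹H.Normal› x hx g₀
    simpa [hc, mul_assoc] using this
  -- ζ c = ζ x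
  have hcx : ζ c = ζ x := by
    have h1' : ζ (c * g₀) = ζ g₀ * ζ c := (hmul g₀ c hcH).2
    have h2' : ζ (g₀ * x) = ζ g₀ * ζ x := (hmul g₀ x hx).1
    have heq : c * g₀ = g₀ * x := by rw [hc]; group
    rw [heq, h2'] at h1'
    exact (mul_left_cancel h1').symm
  -- ζ(x) ζ(x⁻¹) = 1
  have hxinv : ζ x * ζ x⁻¹ = 1 := by
    have := (hmul x x⁻¹ (H.inv_mem hx)).1
    rw [mul_inv_cancel, h1] at this
    exact this.symm
  have hg2 : ζ (g₀ ^ 2) = 1 := by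
    have := (hmul c x⁻¹ (H.inv_mem hx)).1
    rw [hcx, hxinv] at this
    rw [hrel]
    exact this
  have := hsq g₀ hg₀
  rw [hg2] at this
  exact absurd this (by decide)
end
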